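/- arXiv:1805.01662 — 2 statements merged into one kernel-verified Lean document; each statement's English description precedes it below -/
import Mathlib

section
/- Suppose Assumption 1 holds. Then there exists w < ∞ such that sup_{1 ≤ m ≤ (log(1/ε))^{1+δ}} ‖P_1(ε)P_2(ε)⋯P_m(ε) − (P̃^m + ε Σ_{i=1}^{m} a_{i1} P̃^{i−1} P̃⁽¹⁾ P̃^{m−i})‖ = O(ε²(log(1/ε))^w) as ε↓0. -/
open Matrix Topology Filter

/-- The matrix norm ‖A‖ = max_x Σ_y |A(x,y)|. -/
noncomputable def matNorm {T : Type*} [Fintype T] (A : Matrix T T ℝ) : ℝ :=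
  ⨆ x, ∑ y, |A x y|

/-- A square matrix is stochastic if all entries are nonnegative and every row sums to 1. -/
def IsStochastic {T : Type*} [Fintype T] (P : Matrix T T ℝ) : Prop :=
  (∀ x y, 0 ≤ P x y) ∧ ∀ x, ∑ y, P x y = 1

/-- The ordered product P 1 * P 2 * ⋯ * P j. -/
noncomputable def prodP {T : Type*} [Fintype T] [DecidableEq T]
    (P : ℕ → Matrix T T ℝ) (j : ℕ) : Matrix T T ℝ :=
  ((List.range j).map fun i => P (i + 1)).prod

/-!
Write `Pᵢ = P̃ + Dᵢ` with `‖Dᵢ‖ ≤ d`. Since `‖P̃‖ ≤ 1` (it is a limit of the stochastic `P₁(ε)`),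
the remainder of the first-order expansion of `∏ (P̃ + Dᵢ)` is bounded by the remainder
`(1 + d)ᵐ - 1 - m d ≤ (m d)²` of the scalar expansion. Splitting `Dᵢ = ε aᵢ P̃⁽¹⁾ + Eᵢ`, the
`Eᵢ` contribute another `m · O(ε² logˢ)` to the first-order term. For `m ≤ log^{1+δ}(1/ε)`,
the polynomial growth of `aᵢ` gives `m d = O(ε · polylog)`, whence the bound.
-/

attribute [local instance] Matrix.linftyOpNormedAddCommGroup Matrix.linftyOpNormedRing
  Matrix.linftyOpNormedAlgebra

section Matrix

variable {T : Type*} [Fintype T] [Nonempty T]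

lemma matNorm_eq_norm (A : Matrix T T ℝ) : matNorm A = ‖A‖ := by
  rw [linfty_opNorm_def, ← Finset.sup'_eq_sup Finset.univ_nonempty, Finset.sup'_univ_eq_ciSup,
    NNReal.coe_iSup, matNorm]
  simp

lemma IsStochastic.norm_le_one {P : Matrix T T ℝ} (hP : IsStochastic P) : ‖P‖ ≤ 1 := by
  rw [← matNorm_eq_norm]
  refine ciSup_le fun x => le_of_eq ?_
  rw [← hP.2 x]
  exact Finset.sum_congr rfl fun y _ => abs_of_nonneg (hP.1 x y)

end Matrix

lemma one_add_pow_sub_one_sub_mul_le_sq {d : ℝ} (hd : 0 ≤ d) {m : ℕ} (hmd : m * d ≤ 1) :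
    (1 + d) ^ m - 1 - m * d ≤ (m * d) ^ 2 := by
  have hexp : (1 + d) ^ m ≤ Real.exp (m * d) := by
    rw [Real.exp_nat_mul]
    exact pow_le_pow_left₀ (by linarith) (by linarith [Real.add_one_le_exp d]) m
  have := Real.abs_exp_sub_one_sub_id_le (x := m * d) (by rwa [abs_of_nonneg (by positivity)])
  linarith [le_abs_self (Real.exp (m * d) - 1 - m * d)]

lemma mul_rpow_le_rpow_of_le_rpow {L x u v W : ℝ} (hL : 1 ≤ L) (hx : x ≤ L ^ v)
    (h : v + u ≤ W) : x * L ^ u ≤ L ^ W :=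
  calc x * L ^ u ≤ L ^ v * L ^ u := by gcongr
    _ = L ^ (v + u) := (Real.rpow_add (by linarith) _ _).symm
    _ ≤ L ^ W := Real.rpow_le_rpow_of_exponent_le hL h

lemma exists_forall_abs_le_mul_rpow {a : ℕ → ℝ} {p : ℝ} (hp : 0 ≤ p)
    (h : ∃ c > (0 : ℝ), ∃ i₀ : ℕ, ∀ i : ℕ, i₀ ≤ i → |a i| ≤ c * (i : ℝ) ^ p) :
    ∃ A ≥ (0 : ℝ), ∀ i : ℕ, 1 ≤ i → |a i| ≤ A * (i : ℝ) ^ p := by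
  obtain ⟨c, hc, i₀, h⟩ := h
  have hsum : 0 ≤ ∑ j ∈ Finset.range i₀, |a j| := by positivity
  refine ⟨c + ∑ j ∈ Finset.range i₀, |a j|, by positivity, fun i hi => ?_⟩
  have hip : 1 ≤ (i : ℝ) ^ p := Real.one_le_rpow (by exact_mod_cast hi) hp
  rcases le_or_gt i₀ i with hi₀ | hi₀
  · nlinarith [h i hi₀]
  · nlinarith [Finset.single_le_sum (fun j _ => abs_nonneg (a j)) (Finset.mem_range.2 hi₀)]

lemma tendsto_log_one_div_nhdsGT_zero :
    Tendsto (fun ε : ℝ => Real.log (1 / ε)) (𝓝[>] 0) atTop :=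
  Real.tendsto_log_atTop.comp <| tendsto_inv_nhdsGT_zero.congr fun ε => (one_div ε).symm

lemma tendsto_mul_log_one_div_rpow_nhdsGT_zero (W : ℝ) :
    Tendsto (fun ε : ℝ => ε * Real.log (1 / ε) ^ W) (𝓝[>] 0) (𝓝 0) := by
  refine ((tendsto_rpow_mul_exp_neg_mul_atTop_nhds_zero W 1 one_pos).comp
    tendsto_log_one_div_nhdsGT_zero).congr' ?_
  filter_upwards [self_mem_nhdsWithin] with ε (hε : 0 < ε)
  simp only [Function.comp_apply, neg_mul, one_mul, one_div, Real.log_inv, neg_neg,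
    Real.exp_log hε, mul_comm]

lemma tendsto_of_norm_sub_first_order_le {E : Type*} [NormedAddCommGroup E] [NormedSpace ℝ E]
    {Q : ℝ → E} {C B : E} {b c s : ℝ}
    (hQ : ∀ᶠ ε in 𝓝[>] 0, ‖Q ε - (C + (ε * b) • B)‖ ≤ c * ε ^ 2 * Real.log (1 / ε) ^ s) :
    Tendsto Q (𝓝[>] 0) (𝓝 C) := by
  have hε : Tendsto (fun ε : ℝ => ε) (𝓝[>] 0) (𝓝 0) :=
    tendsto_nhdsWithin_of_tendsto_nhds tendsto_id
  have hbound : Tendsto (fun ε : ℝ => |ε * b| * ‖B‖ + c * ε * (ε * Real.log (1 / ε) ^ s))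
      (𝓝[>] 0) (𝓝 0) := by
    simpa using ((hε.mul_const b).abs.mul_const ‖B‖).add
      ((hε.const_mul c).mul (tendsto_mul_log_one_div_rpow_nhdsGT_zero s))
  rw [tendsto_iff_norm_sub_tendsto_zero]
  refine squeeze_zero' (.of_forall fun _ => norm_nonneg _) ?_ hbound
  filter_upwards [hQ] with ε hε
  calc ‖Q ε - C‖ = ‖(ε * b) • B + (Q ε - (C + (ε * b) • B))‖ := by congr 1; abel
    _ ≤ |ε * b| * ‖B‖ + c * ε ^ 2 * Real.log (1 / ε) ^ s := by
        grw [norm_add_le, norm_smul, Real.norm_eq_abs, hε]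
    _ = |ε * b| * ‖B‖ + c * ε * (ε * Real.log (1 / ε) ^ s) := by ring

section FirstOrderExpansion

variable {R : Type*} [NormedRing R] {C : R}

lemma sum_range_succ_pow_mul_mul_pow (X : ℕ → R) (m : ℕ) :
    ∑ i ∈ Finset.range (m + 1), C ^ i * X (i + 1) * C ^ (m + 1 - (i + 1)) =
      (∑ i ∈ Finset.range m, C ^ i * X (i + 1) * C ^ (m - (i + 1))) * C + C ^ m * X (m + 1) := by
  rw [Finset.sum_range_succ, Finset.sum_mul, Nat.sub_self, pow_zero, mul_one]
  congr 1
  refine Finset.sum_congr rfl fun i hi => ?_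
  rw [show m + 1 - (i + 1) = m - (i + 1) + 1 by have := Finset.mem_range.1 hi; omega,
    pow_succ, ← mul_assoc]

variable [NormOneClass R]

lemma norm_sum_pow_mul_mul_pow_le (hC : ‖C‖ ≤ 1) {X : ℕ → R} {x : ℝ} {m : ℕ}
    (hX : ∀ i < m, ‖X (i + 1)‖ ≤ x) :
    ‖∑ i ∈ Finset.range m, C ^ i * X (i + 1) * C ^ (m - (i + 1))‖ ≤ m * x := by
  have hpow (k : ℕ) : ‖C ^ k‖ ≤ 1 := (norm_pow_le C k).trans (pow_le_one₀ (norm_nonneg C) hC)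
  calc _ ≤ ∑ i ∈ Finset.range m, ‖C ^ i * X (i + 1) * C ^ (m - (i + 1))‖ := norm_sum_le _ _
    _ ≤ ∑ _i ∈ Finset.range m, x := Finset.sum_le_sum fun i hi => by
        calc ‖C ^ i * X (i + 1) * C ^ (m - (i + 1))‖
            ≤ ‖C ^ i‖ * ‖X (i + 1)‖ * ‖C ^ (m - (i + 1))‖ := norm_mul₃_le
          _ ≤ ‖X (i + 1)‖ :=
            mul_le_of_le_one_right (by positivity) (hpow _) |>.trans
              (mul_le_of_le_one_left (norm_nonneg _) (hpow i))
          _ ≤ x := hX i (Finset.mem_range.1 hi)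
    _ = m * x := by simp

/-- Equality holds in the scalar case `C = 1`, `D i = d`. -/
lemma norm_prod_add_sub_pow_sub_sum_le (hC : ‖C‖ ≤ 1) {D : ℕ → R} {d : ℝ} :
    ∀ {m : ℕ}, (∀ i < m, ‖D (i + 1)‖ ≤ d) →
      ‖((List.range m).map fun i => C + D (i + 1)).prod - C ^ m -
          ∑ i ∈ Finset.range m, C ^ i * D (i + 1) * C ^ (m - (i + 1))‖
        ≤ (1 + d) ^ m - 1 - m * d
  | 0, _ => by simp
  | m + 1, hD => by
    set Pm := ((List.range m).map fun i => C + D (i + 1)).prod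
    set Sm := ∑ i ∈ Finset.range m, C ^ i * D (i + 1) * C ^ (m - (i + 1))
    have ih := norm_prod_add_sub_pow_sub_sum_le hC (m := m) fun i hi => hD i (by omega)
    have hDm : ‖D (m + 1)‖ ≤ d := hD m m.lt_succ_self
    have hd : 0 ≤ d := (norm_nonneg _).trans hDm
    have hrec : ((List.range (m + 1)).map fun i => C + D (i + 1)).prod - C ^ (m + 1) -
        ∑ i ∈ Finset.range (m + 1), C ^ i * D (i + 1) * C ^ (m + 1 - (i + 1)) =
          (Pm - C ^ m - Sm) * (C + D (m + 1)) + Sm * D (m + 1) := by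
      rw [List.prod_range_succ, sum_range_succ_pow_mul_mul_pow, pow_succ]
      change Pm * (C + D (m + 1)) - C ^ m * C - (Sm * C + C ^ m * D (m + 1)) = _
      clear_value Pm Sm
      noncomm_ring
    have hrem : 0 ≤ (1 + d) ^ m - 1 - m * d := by
      linarith [one_add_mul_le_pow (a := d) (by linarith) m]
    rw [hrec]
    calc _ ≤ ‖Pm - C ^ m - Sm‖ * ‖C + D (m + 1)‖ + ‖Sm‖ * ‖D (m + 1)‖ :=
          (norm_add_le _ _).trans (add_le_add (norm_mul_le _ _) (norm_mul_le _ _))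
      _ ≤ ((1 + d) ^ m - 1 - m * d) * (1 + d) + m * d * d := by
          gcongr
          · exact (norm_add_le _ _).trans (add_le_add hC hDm)
          · exact norm_sum_pow_mul_mul_pow_le hC fun i hi => hD i (by omega)
      _ = (1 + d) ^ (m + 1) - 1 - ↑(m + 1) * d := by push_cast; ring

variable [NormedAlgebra ℝ R]

lemma norm_prod_sub_first_order_le (hC : ‖C‖ ≤ 1) {B : R} {Q : ℕ → R} {b : ℕ → ℝ}
    {α e : ℝ} {m : ℕ} (hb : ∀ i < m, |b (i + 1)| ≤ α)
    (hQ : ∀ i < m, ‖Q (i + 1) - (C + b (i + 1) • B)‖ ≤ e)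
    (hsmall : m * (α * ‖B‖ + e) ≤ 1) :
    ‖((List.range m).map fun i => Q (i + 1)).prod -
        (C ^ m + ∑ i ∈ Finset.range m, b (i + 1) • (C ^ i * B * C ^ (m - (i + 1))))‖
      ≤ (m * (α * ‖B‖ + e)) ^ 2 + m * e := by
  obtain rfl | hm := m.eq_zero_or_pos
  · simp
  set E : ℕ → R := fun i => Q i - (C + b i • B)
  have hQE (i : ℕ) : Q i - C = b i • B + E i := by simp only [E]; abel
  have hD : ∀ i < m, ‖Q (i + 1) - C‖ ≤ α * ‖B‖ + e := fun i hi => by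
    calc ‖Q (i + 1) - C‖ ≤ |b (i + 1)| * ‖B‖ + e := by
          grw [hQE, norm_add_le, norm_smul, Real.norm_eq_abs, hQ i hi]
      _ ≤ α * ‖B‖ + e := by grw [hb i hi]
  have hd : 0 ≤ α * ‖B‖ + e := (norm_nonneg _).trans (hD 0 hm)
  have hsum : ∑ i ∈ Finset.range m, C ^ i * (Q (i + 1) - C) * C ^ (m - (i + 1)) =
      ∑ i ∈ Finset.range m, b (i + 1) • (C ^ i * B * C ^ (m - (i + 1))) +
        ∑ i ∈ Finset.range m, C ^ i * E (i + 1) * C ^ (m - (i + 1)) := by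
    rw [← Finset.sum_add_distrib]
    refine Finset.sum_congr rfl fun i _ => ?_
    rw [hQE, mul_add, add_mul, mul_smul_comm, smul_mul_assoc]
  have hR := norm_prod_add_sub_pow_sub_sum_le hC (D := fun i => Q i - C) hD
  simp only [add_sub_cancel, hsum] at hR
  calc _ = ‖(((List.range m).map fun i => Q (i + 1)).prod - C ^ m -
          (∑ i ∈ Finset.range m, b (i + 1) • (C ^ i * B * C ^ (m - (i + 1))) +
            ∑ i ∈ Finset.range m, C ^ i * E (i + 1) * C ^ (m - (i + 1)))) +
          ∑ i ∈ Finset.range m, C ^ i * E (i + 1) * C ^ (m - (i + 1))‖ := by congr 1; abel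
    _ ≤ ((1 + (α * ‖B‖ + e)) ^ m - 1 - m * (α * ‖B‖ + e)) + m * e :=
        (norm_add_le _ _).trans (add_le_add hR (norm_sum_pow_mul_mul_pow_le hC hQ))
    _ ≤ (m * (α * ‖B‖ + e)) ^ 2 + m * e := by
        grw [one_add_pow_sub_one_sub_mul_le_sq hd hsmall]

lemma norm_prod_sub_first_order_le_of_scale (hC : ‖C‖ ≤ 1) {B : R} {Q : ℕ → R} {b : ℕ → ℝ}
    {α e ε Λ A c : ℝ} {m : ℕ} (hb : ∀ i < m, |b (i + 1)| ≤ α)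
    (hQ : ∀ i < m, ‖Q (i + 1) - (C + b (i + 1) • B)‖ ≤ e)
    (hα : m * α ≤ A * (ε * Λ)) (he : m * e ≤ c * ε ^ 2 * Λ) (hc : 0 ≤ c) (hε : 0 ≤ ε)
    (hε1 : ε ≤ 1) (hΛ : 1 ≤ Λ) (hsmall : (A * ‖B‖ + c) * (ε * Λ) ≤ 1) :
    ‖((List.range m).map fun i => Q (i + 1)).prod -
        (C ^ m + ∑ i ∈ Finset.range m, b (i + 1) • (C ^ i * B * C ^ (m - (i + 1))))‖
      ≤ ((A * ‖B‖ + c) ^ 2 + c) * ε ^ 2 * Λ ^ 2 := by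
  obtain rfl | hm := m.eq_zero_or_pos
  · simp only [List.range_zero, List.map_nil, List.prod_nil, pow_zero, Finset.range_zero,
      Finset.sum_empty, add_zero, sub_self, norm_zero]
    positivity
  have hα0 : 0 ≤ α := (abs_nonneg _).trans (hb 0 hm)
  have he0 : 0 ≤ e := (norm_nonneg _).trans (hQ 0 hm)
  have hd : m * (α * ‖B‖ + e) ≤ (A * ‖B‖ + c) * (ε * Λ) := by
    have hε2 : ε ^ 2 ≤ ε := pow_le_of_le_one hε hε1 two_ne_zero
    calc m * (α * ‖B‖ + e) = m * α * ‖B‖ + m * e := by ring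
      _ ≤ A * (ε * Λ) * ‖B‖ + c * ε ^ 2 * Λ := by gcongr
      _ ≤ A * (ε * Λ) * ‖B‖ + c * ε * Λ := by gcongr
      _ = (A * ‖B‖ + c) * (ε * Λ) := by ring
  calc _ ≤ (m * (α * ‖B‖ + e)) ^ 2 + m * e :=
        norm_prod_sub_first_order_le hC hb hQ (hd.trans hsmall)
    _ ≤ ((A * ‖B‖ + c) * (ε * Λ)) ^ 2 + c * ε ^ 2 * Λ ^ 2 := by
        have hΛ2 : Λ ≤ Λ ^ 2 := le_self_pow₀ hΛ two_ne_zero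
        exact add_le_add (pow_le_pow_left₀ (by positivity) hd 2) (he.trans (by gcongr))
    _ = ((A * ‖B‖ + c) ^ 2 + c) * ε ^ 2 * Λ ^ 2 := by ring

/-- The scale is `Λ = Lᵂ`, where `Lᵛ` bounds the number of factors and `W = v (1 + p) + |s|`
absorbs both `m · max |aᵢ| ≤ Lᵛ · L^{vp}` and `m · Lˢ ≤ L^{v+s}`. -/
lemma norm_prod_sub_first_order_le_rpow (hC : ‖C‖ ≤ 1) {B : R} {Q : ℕ → R} {a : ℕ → ℝ}
    {ε L A c s v p : ℝ} {m : ℕ} (hε : 0 < ε) (hε1 : ε ≤ 1) (hL : 1 ≤ L) (hv : 0 ≤ v)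
    (hp : 0 ≤ p) (hA : 0 ≤ A) (hc : 0 ≤ c) (hmL : (m : ℝ) ≤ L ^ v)
    (ha : ∀ i : ℕ, 1 ≤ i → |a i| ≤ A * (i : ℝ) ^ p)
    (hQ : ∀ i < m, ‖Q (i + 1) - (C + (ε * a (i + 1)) • B)‖ ≤ c * ε ^ 2 * L ^ s)
    (hsmall : (A * ‖B‖ + c) * (ε * L ^ (v * (1 + p) + |s|)) ≤ 1) :
    ‖((List.range m).map fun i => Q (i + 1)).prod -
        (C ^ m + ε • ∑ i ∈ Finset.range m, a (i + 1) • (C ^ i * B * C ^ (m - (i + 1))))‖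
      ≤ ((A * ‖B‖ + c) ^ 2 + c) * ε ^ 2 * L ^ ((v * (1 + p) + |s|) * 2) := by
  set W := v * (1 + p) + |s|
  have hb : ∀ i < m, |ε * a (i + 1)| ≤ ε * (A * L ^ (v * p)) := fun i hi => by
    have hi' : ((i + 1 : ℕ) : ℝ) ≤ L ^ v := (Nat.cast_le.2 (Nat.succ_le_of_lt hi)).trans hmL
    rw [abs_mul, abs_of_pos hε, Real.rpow_mul (by linarith)]
    grw [ha (i + 1) le_add_self, hi']
  have hα : m * (ε * (A * L ^ (v * p))) ≤ A * (ε * L ^ W) :=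
    calc _ = ε * A * (m * L ^ (v * p)) := by ring
      _ ≤ ε * A * L ^ W := by
          grw [mul_rpow_le_rpow_of_le_rpow (W := W) hL hmL (by nlinarith [abs_nonneg s])]
      _ = A * (ε * L ^ W) := by ring
  have he : m * (c * ε ^ 2 * L ^ s) ≤ c * ε ^ 2 * L ^ W :=
    calc _ = c * ε ^ 2 * (m * L ^ s) := by ring
      _ ≤ c * ε ^ 2 * L ^ W := by
          grw [mul_rpow_le_rpow_of_le_rpow (W := W) hL hmL
            (by nlinarith [le_abs_self s, mul_nonneg hv hp])]
  rw [Finset.smul_sum, Real.rpow_mul (by linarith), Real.rpow_two]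
  simp only [smul_smul]
  exact norm_prod_sub_first_order_le_of_scale (b := fun i => ε * a i) hC hb hQ hα he hc hε.le
    hε1 (Real.one_le_rpow hL (by positivity)) hsmall

end FirstOrderExpansion

/-- Proposition 2: under Assumption 1, there is w < ∞ such that, uniformly over
1 ≤ m ≤ (log(1/ε))^{1+δ},
‖P₁(ε)⋯P_m(ε) − (P̃^m + ε Σ_{i=1}^m a_{i1} P̃^{i−1} P̃⁽¹⁾ P̃^{m−i})‖ = O(ε²(log(1/ε))^w). -/
theorem product_expansion_first_order
    {S : Type*} [Fintype S] [Nonempty S] [DecidableEq S]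
    (P : ℕ → ℝ → Matrix S S ℝ) (a : ℕ → ℝ) (Pt Pt1 : Matrix S S ℝ)
    (s δ p : ℝ) (hδ : 0 < δ) (hp : 0 < p)
    (hstoch : ∀ k : ℕ, 1 ≤ k → ∀ ε : ℝ, 0 < ε → IsStochastic (P k ε))
    (hi : ∃ c > (0:ℝ), ∃ ε₀ > (0:ℝ), ∀ ε : ℝ, 0 < ε → ε < ε₀ →
      ∀ i : ℕ, 1 ≤ i → (i : ℝ) ≤ Real.log (1/ε) ^ (1 + δ) →
        matNorm (P i ε - (Pt + (ε * a i) • Pt1)) ≤ c * ε ^ 2 * Real.log (1/ε) ^ s)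
    (hii : ∃ c > (0:ℝ), ∃ i₀ : ℕ, ∀ i : ℕ, i₀ ≤ i → |a i| ≤ c * (i : ℝ) ^ p) :
    ∃ w : ℝ, ∃ c > (0:ℝ), ∃ ε₁ > (0:ℝ), ∀ ε : ℝ, 0 < ε → ε < ε₁ →
      ∀ m : ℕ, 1 ≤ m → (m : ℝ) ≤ Real.log (1/ε) ^ (1 + δ) →
        matNorm (prodP (fun k => P k ε) m -
            (Pt ^ m + ε • ∑ i ∈ Finset.range m,
              a (i + 1) • (Pt ^ i * Pt1 * Pt ^ (m - (i + 1)))))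
          ≤ c * ε ^ 2 * Real.log (1/ε) ^ w := by
  obtain ⟨c, hc, ε₀, hε₀, hP⟩ := hi
  obtain ⟨A, hA, ha⟩ := exists_forall_abs_le_mul_rpow hp.le hii
  set W := (1 + δ) * (1 + p) + |s|
  set M := A * ‖Pt1‖ + c
  have hgood : ∀ᶠ ε in 𝓝[>] 0, ε < ε₀ ∧ ε ≤ 1 ∧ 1 ≤ Real.log (1 / ε) ∧
      M * (ε * Real.log (1 / ε) ^ W) ≤ 1 := by
    have hsmall := ((tendsto_mul_log_one_div_rpow_nhdsGT_zero W).const_mul M).eventually_lt_const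
      (u := 1) (by simp)
    filter_upwards [Ioo_mem_nhdsGT hε₀, Ioo_mem_nhdsGT one_pos,
      tendsto_log_one_div_nhdsGT_zero.eventually_ge_atTop 1, hsmall] with ε hε₀ hε1 hL hsmall
    exact ⟨hε₀.2, hε1.2.le, hL, hsmall.le⟩
  have hPt : ‖Pt‖ ≤ 1 := by
    refine le_of_tendsto (tendsto_of_norm_sub_first_order_le (Q := P 1) (B := Pt1) (b := a 1)
      (c := c) (s := s) ?_).norm ?_
    · filter_upwards [hgood, self_mem_nhdsWithin] with ε ⟨hεε₀, _, hL, _⟩ hε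
      rw [← matNorm_eq_norm]
      exact hP ε hε hεε₀ 1 le_rfl (by simpa using Real.one_le_rpow hL (by linarith))
    · filter_upwards [self_mem_nhdsWithin] with ε hε using (hstoch 1 le_rfl ε hε).norm_le_one
  obtain ⟨ε₁, hε₁, hsub⟩ := mem_nhdsGT_iff_exists_Ioo_subset.1 hgood
  refine ⟨W * 2, M ^ 2 + c, by positivity, ε₁, hε₁, fun ε hε hεε₁ m _ hmL => ?_⟩
  obtain ⟨hεε₀, hε1, hL, hsmall⟩ := hsub ⟨hε, hεε₁⟩
  rw [matNorm_eq_norm]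
  refine norm_prod_sub_first_order_le_rpow (Q := fun k => P k ε) (B := Pt1) hPt hε hε1 hL
    (by linarith) hp.le hA hc.le hmL ha (fun i hi => ?_) hsmall
  rw [← matNorm_eq_norm]
  exact hP ε hε hεε₀ (i + 1) le_add_self ((Nat.cast_le.2 (Nat.succ_le_of_lt hi)).trans hmL)
end

section
/- Let Q be a square real matrix indexed by a finite set S, let e be the all-ones column vector, and let π be a row vector with πe = 1, πQ = 0, and Qe = 0. Set Π = eπ. Let λ ≠ 0 be a real number, and assume that both λΠ − Q and Π − Q are invertible. Then for every square matrix M with Me = 0, M(λΠ − Q)^{−2} = M(Π − Q)^{−2}. -/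
open Matrix

/-- If πe = 1, πQ = 0, Qe = 0, Π = eπ, λ ≠ 0, and both λΠ − Q and Π − Q are
invertible, then M(λΠ − Q)⁻² = M(Π − Q)⁻² for every matrix M with Me = 0. -/
theorem resolvent_square_independent_of_lambda
    {S : Type*} [Fintype S] [DecidableEq S]
    (Q : Matrix S S ℝ) (π : S → ℝ)
    (hπe : ∑ x, π x = 1) (hπQ : π ᵥ* Q = 0) (hQe : Q *ᵥ (fun _ => (1:ℝ)) = 0)
    (l : ℝ) (hl : l ≠ 0)
    (h1 : IsUnit (l • (Matrix.of fun _ y => π y) - Q))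
    (h2 : IsUnit ((Matrix.of fun _ y => π y) - Q)) :
    ∀ M : Matrix S S ℝ, M *ᵥ (fun _ => (1:ℝ)) = 0 →
      M * ((l • (Matrix.of fun _ y => π y) - Q)⁻¹) ^ 2 =
        M * (((Matrix.of fun _ y => π y) - Q)⁻¹) ^ 2 := by
  intro M hMe
  set P : Matrix S S ℝ := Matrix.of fun _ y => π y with hP
  set e : S → ℝ := fun _ => (1:ℝ) with he
  set A : Matrix S S ℝ := l • P - Q with hA
  set B : Matrix S S ℝ := P - Q with hB
  have hAdet : IsUnit A.det := (Matrix.isUnit_iff_isUnit_det A).mp h1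
  have hBdet : IsUnit B.det := (Matrix.isUnit_iff_isUnit_det B).mp h2
  -- P *ᵥ e = e
  have hPe : P *ᵥ e = e := by
    funext x
    simp [hP, he, Matrix.mulVec, dotProduct, hπe]
  have hAe : A *ᵥ e = l • e := by
    simp [hA, Matrix.sub_mulVec, Matrix.smul_mulVec, hPe, hQe]
  have hBe : B *ᵥ e = e := by
    simp [hB, Matrix.sub_mulVec, hPe, hQe]
  -- any N with N e = 0 has N * P = 0
  have hNP : ∀ N : Matrix S S ℝ, N *ᵥ e = 0 → N * P = 0 := by
    intro N hN
    ext x z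
    have hx : ∑ y, N x y = 0 := by
      have := congrFun hN x
      simpa [Matrix.mulVec, dotProduct, he] using this
    simp only [Matrix.mul_apply, hP, Matrix.of_apply, Matrix.zero_apply]
    rw [← Finset.sum_mul, hx, zero_mul]
  -- any N with N e = 0 has N * A = N * B
  have hNA : ∀ N : Matrix S S ℝ, N *ᵥ e = 0 → N * A = N * B := by
    intro N hN
    have h0 := hNP N hN
    simp [hA, hB, Matrix.mul_sub, Matrix.mul_smul, h0]
  -- X := M * A⁻¹ * A⁻¹ annihilates e
  have hAinv_e : A⁻¹ *ᵥ e = l⁻¹ • e := by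
    have : A *ᵥ (l⁻¹ • e) = e := by
      rw [Matrix.mulVec_smul, hAe, smul_smul, inv_mul_cancel₀ hl, one_smul]
    calc A⁻¹ *ᵥ e = A⁻¹ *ᵥ (A *ᵥ (l⁻¹ • e)) := by rw [this]
      _ = (A⁻¹ * A) *ᵥ (l⁻¹ • e) := by rw [Matrix.mulVec_mulVec]
      _ = l⁻¹ • e := by rw [Matrix.nonsing_inv_mul A hAdet, Matrix.one_mulVec]
  set X : Matrix S S ℝ := M * A⁻¹ * A⁻¹ with hX
  have hXe : X *ᵥ e = 0 := by
    rw [hX, ← Matrix.mulVec_mulVec, ← Matrix.mulVec_mulVec, hAinv_e]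
    simp [Matrix.mulVec_smul, hAinv_e, hMe]
  have hXA : X * A = M * A⁻¹ := by
    rw [hX, Matrix.mul_assoc, Matrix.nonsing_inv_mul A hAdet, Matrix.mul_one]
  have hXAA : X * A * A = M := by
    rw [hXA, Matrix.mul_assoc, Matrix.nonsing_inv_mul A hAdet, Matrix.mul_one]
  have hXBe : (X * B) *ᵥ e = 0 := by
    rw [← Matrix.mulVec_mulVec, hBe, hXe]
  have hM : X * B * B = M := by
    have h1' : X * A = X * B := hNA X hXe
    have h2' : (X * B) * A = (X * B) * B := hNA (X * B) hXBe
    rw [← h2', ← h1', hXAA]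
  -- conclude
  have hgoal : X = M * B⁻¹ * B⁻¹ := by
    have := congrArg (fun Z => Z * B⁻¹ * B⁻¹) hM
    simpa [Matrix.mul_assoc, Matrix.mul_nonsing_inv B hBdet, Matrix.mul_one] using this
  calc M * (A⁻¹)^2 = X := by rw [sq, hX, Matrix.mul_assoc]
    _ = M * (B⁻¹)^2 := by rw [hgoal, sq, Matrix.mul_assoc]
end
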